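/- In the no-limit clairvoyance game with n = 2, the unique observable perfect equilibrium strategy for player 2 (after observing a bet of 1) calls the bet of 1 with probability 5/9: for every α ∈ [1/2, 2/3] with α ≠ 5/9, no Nash equilibrium of the perturbed game G_ε (requiring φ(W,1)+φ(L,1) ≥ ε) has player 2 calling a bet of 1 with probability α, while for α = 5/9 such equilibria exist for all small ε > 0. -/

import Mathlib

/-!  A concrete model of the no-limit clairvoyance game with integer bet sizes.
Player 1 is dealt a winning hand (`true`) or losing hand (`false`) with probability
1/2 each, bets an integer `x ∈ {0,…,n}` (0 = check), and player 2 calls or folds.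
A strategy for player 1 assigns to each hand a probability distribution over bet
sizes; a strategy for player 2 assigns to each bet size a calling probability. -/

/-- `s` is a valid strategy for player 1 in the clairvoyance game with stack `n`. -/
def IsStrat1 (n : ℕ) (s : Bool → ℕ → ℝ) : Prop :=
  (∀ h x, 0 ≤ s h x) ∧ (∀ h : Bool, ∑ x ∈ Finset.range (n + 1), s h x = 1)

/-- `s` is a valid strategy for player 2 (a calling probability for each bet size). -/
def IsStrat2 (n : ℕ) (s : ℕ → ℝ) : Prop :=
  ∀ x, 0 ≤ s x ∧ s x ≤ 1

/-- Player 1's payoff with hand `h` after betting `x`, when player 2 calls a bet of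
size `x` with probability `s2 x`: a check yields ±0.5, a called bet of `x` yields
±(0.5 + x), and a fold yields +0.5. -/
noncomputable def pay (s2 : ℕ → ℝ) (h : Bool) (x : ℕ) : ℝ :=
  if x = 0 then (if h then 0.5 else -0.5)
  else s2 x * (if h then (0.5 + (x : ℝ)) else -(0.5 + (x : ℝ))) + (1 - s2 x) * 0.5

/-- Player 1's expected payoff (hands equiprobable); the game is zero-sum. -/
noncomputable def u1 (n : ℕ) (s1 : Bool → ℕ → ℝ) (s2 : ℕ → ℝ) : ℝ :=
  (1/2) * ∑ x ∈ Finset.range (n + 1), s1 true x * pay s2 true x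
    + (1/2) * ∑ x ∈ Finset.range (n + 1), s1 false x * pay s2 false x

/-- `(s1, s2)` is a Nash equilibrium of the (zero-sum) clairvoyance game:
no unilateral profitable deviation. -/
def IsNash (n : ℕ) (s1 : Bool → ℕ → ℝ) (s2 : ℕ → ℝ) : Prop :=
  IsStrat1 n s1 ∧ IsStrat2 n s2 ∧
  (∀ s1', IsStrat1 n s1' → u1 n s1' s2 ≤ u1 n s1 s2) ∧
  (∀ s2', IsStrat2 n s2' → u1 n s1 s2 ≤ u1 n s1 s2')

/-- Nash equilibrium of the perturbed game `G_ε` (with `n = 2`) in which player 1 must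
bet 1 with total probability (over the winning and losing hand) at least `ε`. -/
def IsNashPert (ε : ℝ) (s1 : Bool → ℕ → ℝ) (s2 : ℕ → ℝ) : Prop :=
  IsStrat1 2 s1 ∧ ε ≤ s1 true 1 + s1 false 1 ∧ IsStrat2 2 s2 ∧
  (∀ s1', IsStrat1 2 s1' → ε ≤ s1' true 1 + s1' false 1 →
    u1 2 s1' s2 ≤ u1 2 s1 s2) ∧
  (∀ s2', IsStrat2 2 s2' → u1 2 s1 s2 ≤ u1 2 s1 s2')

/-! Player 2 calls the bet of 1 with a probability strictly between 0 and 1, so player 1 must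
keep him indifferent there: the winning hand bets 1 exactly twice as often as the losing hand.
When the bet of 2 is called with probability 1/3, every unit of mass that player 1 moves onto
the bet of 1 costs him `2/3 - α` with the winning hand and `2α - 1` with the losing hand, and in
the indifferent 2 : 1 mix this averages to exactly 1/9, whatever `α` is. The two costs agree
(at 1/9) only for `α = 5/9`; otherwise one of them is below 1/9, and placing the forced mass `ε`
on that hand alone is a profitable deviation. For `α = 5/9` the 2 : 1 mix, completed by a
losing-hand bet of 2 that keeps player 2 indifferent at the bet of 2 as well, is an equilibrium
of `G_ε`. -/

open Finset

section Indifference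

lemma u1_sub_u1_eq_sum (n : ℕ) (s1 : Bool → ℕ → ℝ) (s2 s2' : ℕ → ℝ) :
    u1 n s1 s2' - u1 n s1 s2 = (1/2) * ∑ x ∈ Ico 1 (n + 1),
      (s2' x - s2 x) * (x * s1 true x - (x + 1) * s1 false x) := by
  have hterm : ∀ x ∈ Ico 1 (n + 1),
      s1 true x * pay s2' true x + s1 false x * pay s2' false x
        - (s1 true x * pay s2 true x + s1 false x * pay s2 false x)
      = (s2' x - s2 x) * (x * s1 true x - (x + 1) * s1 false x) := by
    intro x hx
    have hx0 : x ≠ 0 := by simp at hx; omega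
    simp only [pay, hx0, if_false, if_true, Bool.false_eq_true]
    ring
  calc u1 n s1 s2' - u1 n s1 s2
      = (1/2) * ∑ x ∈ Ico 0 (n + 1),
          (s1 true x * pay s2' true x + s1 false x * pay s2' false x
            - (s1 true x * pay s2 true x + s1 false x * pay s2 false x)) := by
        simp only [u1, ← range_eq_Ico, sum_sub_distrib, sum_add_distrib]
        ring
    _ = _ := by
        rw [sum_eq_sum_Ico_succ_bot (Nat.succ_pos n), sum_congr rfl hterm]
        simp [pay]

variable {n : ℕ} {s1 : Bool → ℕ → ℝ} {s2 s2' : ℕ → ℝ}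

lemma u1_eq_of_indifferent
    (h : ∀ x ∈ Ico 1 (n + 1), (x : ℝ) * s1 true x = (x + 1) * s1 false x) :
    u1 n s1 s2' = u1 n s1 s2 := by
  have hsum := u1_sub_u1_eq_sum n s1 s2 s2'
  rw [sum_eq_zero fun x hx => by rw [h x hx, sub_self, mul_zero]] at hsum
  linarith

lemma isStrat2_update (hs2 : IsStrat2 n s2) (x : ℕ) {q : ℝ} (hq0 : 0 ≤ q) (hq1 : q ≤ 1) :
    IsStrat2 n (Function.update s2 x q) := by
  intro y
  rw [Function.update_apply]
  split_ifs
  exacts [⟨hq0, hq1⟩, hs2 y]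

lemma u1_update_sub (x : ℕ) (hx : x ∈ Ico 1 (n + 1)) (q : ℝ) :
    u1 n s1 (Function.update s2 x q) - u1 n s1 s2
      = (1/2) * ((q - s2 x) * (x * s1 true x - (x + 1) * s1 false x)) := by
  rw [u1_sub_u1_eq_sum, sum_eq_single_of_mem x hx]
  · simp
  · intro y _ hyx
    simp [Function.update_of_ne hyx]

lemma indifferent_of_interior_call (hs2 : IsStrat2 n s2)
    (hbr : ∀ s2', IsStrat2 n s2' → u1 n s1 s2 ≤ u1 n s1 s2')
    {x : ℕ} (hx : x ∈ Ico 1 (n + 1)) (h0 : 0 < s2 x) (h1 : s2 x < 1) :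
    (x : ℝ) * s1 true x = (x + 1) * s1 false x := by
  have hgain : ∀ q, 0 ≤ q → q ≤ 1 → 0 ≤ (q - s2 x) * (x * s1 true x - (x + 1) * s1 false x) :=
    fun q hq0 hq1 => by
      linarith [hbr _ (isStrat2_update hs2 x hq0 hq1), u1_update_sub (s1 := s1) (s2 := s2) x hx q]
  have hfold := hgain 0 le_rfl zero_le_one
  have hcall := hgain 1 zero_le_one le_rfl
  nlinarith

end Indifference

def strat1OfBets (t₁ t₂ f₁ f₂ : ℝ) : Bool → ℕ → ℝ
  | true, 0 => 1 - t₁ - t₂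
  | true, 1 => t₁
  | true, 2 => t₂
  | false, 0 => 1 - f₁ - f₂
  | false, 1 => f₁
  | false, 2 => f₂
  | _, _ => 0

lemma isStrat1_strat1OfBets {t₁ t₂ f₁ f₂ : ℝ} (ht₁ : 0 ≤ t₁) (ht₂ : 0 ≤ t₂) (ht : t₁ + t₂ ≤ 1)
    (hf₁ : 0 ≤ f₁) (hf₂ : 0 ≤ f₂) (hf : f₁ + f₂ ≤ 1) :
    IsStrat1 2 (strat1OfBets t₁ t₂ f₁ f₂) := by
  refine ⟨fun h x => ?_, fun h => ?_⟩
  · rcases h with _ | _ <;> rcases x with _ | _ | _ | x <;> simp [strat1OfBets] <;> linarith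
  · rcases h with _ | _ <;> simp [strat1OfBets, sum_range_succ] <;> ring

section TwoBets

variable {s1 : Bool → ℕ → ℝ} {s2 : ℕ → ℝ}

/-- Relative to the value `1/3`, checking the winning hand costs `2/3`, betting it 1 costs
`2/3 - s2 1`, and betting the losing hand 1 costs `2 s2 1 - 1`; everything else is free. -/
lemma u1_two_eq (hs1 : IsStrat1 2 s1) (h2 : s2 2 = 1/3) :
    u1 2 s1 s2 = 1/3 - ((2/3) * s1 true 0 + (2/3 - s2 1) * s1 true 1
      + (2 * s2 1 - 1) * s1 false 1) / 2 := by
  have ht := hs1.2 true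
  have hf := hs1.2 false
  simp only [sum_range_succ, sum_range_zero, zero_add] at ht hf
  simp [u1, pay, sum_range_succ, h2]
  linear_combination (7/12) * ht - (1/4) * hf

lemma u1_two_le_of_indifferent {ε : ℝ} (hs1 : IsStrat1 2 s1) (h2 : s2 2 = 1/3)
    (hind : s1 true 1 = 2 * s1 false 1) (hε : ε ≤ s1 true 1 + s1 false 1) :
    u1 2 s1 s2 ≤ 1/3 - ε/18 := by
  rw [u1_two_eq hs1 h2, hind]
  linarith [hs1.1 true 0]

lemma exists_deviation_gt {ε : ℝ} (hε : 0 < ε) (hε1 : ε ≤ 1) (h2 : s2 2 = 1/3)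
    (hα : s2 1 ≠ 5/9) :
    ∃ s1', IsStrat1 2 s1' ∧ ε ≤ s1' true 1 + s1' false 1 ∧ 1/3 - ε/18 < u1 2 s1' s2 := by
  rcases hα.lt_or_gt with hlt | hgt
  · have hs1' := isStrat1_strat1OfBets (t₁ := 0) (t₂ := 1) (f₁ := ε) (f₂ := 0) le_rfl
      zero_le_one (by norm_num) hε.le le_rfl (by linarith)
    refine ⟨_, hs1', by simp [strat1OfBets], ?_⟩
    rw [u1_two_eq hs1' h2]
    simp only [strat1OfBets]
    linarith [mul_pos hε (sub_pos.2 hlt)]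
  · have hs1' := isStrat1_strat1OfBets (t₁ := ε) (t₂ := 1 - ε) (f₁ := 0) (f₂ := 0) hε.le
      (by linarith) (by linarith) le_rfl le_rfl (by norm_num)
    refine ⟨_, hs1', by simp [strat1OfBets], ?_⟩
    rw [u1_two_eq hs1' h2]
    simp only [strat1OfBets]
    linarith [mul_pos hε (sub_pos.2 hgt)]

lemma isNashPert_five_ninths {ε : ℝ} (hε : 0 ≤ ε) (hε1 : ε ≤ 1) (hs2 : IsStrat2 2 s2)
    (h1 : s2 1 = 5/9) (h2 : s2 2 = 1/3) :
    IsNashPert ε (strat1OfBets (2*ε/3) (1 - 2*ε/3) (ε/3) (2/3 - 4*ε/9)) s2 := by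
  have hs1 := isStrat1_strat1OfBets (t₁ := 2*ε/3) (t₂ := 1 - 2*ε/3) (f₁ := ε/3)
    (f₂ := 2/3 - 4*ε/9) (by linarith) (by linarith) (by linarith) (by linarith) (by linarith)
    (by linarith)
  have hval : u1 2 (strat1OfBets (2*ε/3) (1 - 2*ε/3) (ε/3) (2/3 - 4*ε/9)) s2 = 1/3 - ε/18 := by
    rw [u1_two_eq hs1 h2, h1]
    simp only [strat1OfBets]
    ring
  refine ⟨hs1, by simp only [strat1OfBets]; linarith, hs2, fun s1' hs1' hε' => ?_,
    fun s2' _ => (u1_eq_of_indifferent fun x hx => ?_).ge⟩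
  · rw [hval, u1_two_eq hs1' h2, h1]
    linarith [hs1'.1 true 0]
  · obtain rfl | rfl : x = 1 ∨ x = 2 := by simp at hx; omega
    all_goals simp only [strat1OfBets]; push_cast; ring

end TwoBets

/-- In the clairvoyance game with `n = 2`, the unique observable perfect equilibrium
strategy for player 2 after observing a bet of 1 calls it with probability 5/9: among
the Nash equilibrium calling probabilities `α ∈ [1/2, 2/3]` (with a bet of 2 called
with probability 1/3), for `α ≠ 5/9` no Nash equilibrium of the perturbed game `G_ε`
has player 2 calling a bet of 1 with probability `α`, while for `α = 5/9` such
perturbed equilibria exist for all small `ε > 0`. -/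
theorem ope_calls_five_ninths (α : ℝ) (h1 : 1/2 ≤ α) (h2 : α ≤ 2/3)
    (s2 : ℕ → ℝ) (hs2 : s2 = fun x => if x = 2 then 1/3 else α) :
    (α ≠ 5/9 → ∀ ε : ℝ, 0 < ε → ε ≤ 1 → ¬ ∃ s1, IsNashPert ε s1 s2) ∧
    (α = 5/9 → ∀ ε : ℝ, 0 < ε → ε ≤ 1 → ∃ s1, IsNashPert ε s1 s2) := by
  have hs2_one : s2 1 = α := by simp [hs2]
  have hs2_two : s2 2 = 1/3 := by simp [hs2]
  have hs2_strat : IsStrat2 2 s2 := by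
    intro x
    rw [hs2]
    dsimp only
    split_ifs <;> constructor <;> linarith
  refine ⟨fun hα ε hε hε1 ⟨s1, hs1, hbet, _, hbr1, hbr2⟩ => ?_, ?_⟩
  · have hind : s1 true 1 = 2 * s1 false 1 := by
      have := indifferent_of_interior_call hs2_strat hbr2 (x := 1) (by simp)
        (by linarith) (by linarith)
      push_cast at this
      linarith
    obtain ⟨s1', hs1', hbet', hgt⟩ :=
      exists_deviation_gt hε hε1 hs2_two (hs2_one ▸ hα)
    linarith [hbr1 s1' hs1' hbet', u1_two_le_of_indifferent hs1 hs2_two hind hbet]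
  · rintro rfl ε hε hε1
    exact ⟨_, isNashPert_five_ninths hε.le hε1 hs2_strat hs2_one hs2_two⟩
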